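/- arXiv:2310.00957 — 4 statements merged into one kernel-verified Lean document; each statement's English description precedes it below -/
import Mathlib

section
/- Let R, S be Hermitian 2×2 complex matrices with R positive definite (ker R = {0}) and S not a real scalar multiple of R. Then there exists λ₀ ∈ ℝ such that λ₀·R + S is positive semidefinite and has rank exactly 1. -/
/-!
Write `R = b⋆ b` with `b` invertible and let `μ` be the least point of the spectrum of the
self-adjoint element `b⋆⁻¹ S b⁻¹`. Then `b⋆⁻¹ S b⁻¹ - μ` is positive and singular, and so is its
congruence `S - μ R`. A singular positive `2 × 2` matrix has rank at most `1`, and `S - μ R ≠ 0`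
because `S` is not a real multiple of `R`.
-/

open Matrix ComplexOrder

section CFC

variable {A : Type*} [PartialOrder A] [Ring A] [StarRing A] [TopologicalSpace A]
  [StarOrderedRing A] [Algebra ℝ A] [ContinuousFunctionalCalculus ℝ A IsSelfAdjoint]

theorem IsSelfAdjoint.exists_nonneg_sub_algebraMap_not_isUnit [Nontrivial A] {a : A}
    (ha : IsSelfAdjoint a) :
    ∃ μ : ℝ, 0 ≤ a - algebraMap ℝ A μ ∧ ¬IsUnit (a - algebraMap ℝ A μ) := by
  obtain ⟨μ, hμ, hle⟩ :=
    (ContinuousFunctionalCalculus.isCompact_spectrum (R := ℝ) a).exists_isLeast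
      (ContinuousFunctionalCalculus.spectrum_nonempty a ha)
  refine ⟨μ, sub_nonneg.mpr (algebraMap_le_of_le_spectrum hle ha), fun hu => ?_⟩
  exact spectrum.mem_iff.mp hμ (by simpa using hu.neg)

theorem IsStrictlyPositive.exists_nonneg_not_isUnit_smul_add [NonnegSpectrumClass ℝ A]
    [IsSemitopologicalRing A] [T2Space A] [Nontrivial A] {r s : A} (hr : IsStrictlyPositive r)
    (hs : IsSelfAdjoint s) : ∃ t : ℝ, 0 ≤ t • r + s ∧ ¬IsUnit (t • r + s) := by
  obtain ⟨b, hb, rfl⟩ := CStarAlgebra.isStrictlyPositive_iff_eq_star_mul_self.mp hr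
  lift b to Aˣ using hb
  obtain ⟨μ, hnn, hnu⟩ := (hs.conjugate' (↑b⁻¹ : A)).exists_nonneg_sub_algebraMap_not_isUnit
  have hconj : (-μ) • (star (b : A) * b) + s
      = star (b : A) * (star (↑b⁻¹ : A) * s * ↑b⁻¹ - algebraMap ℝ A μ) * b := by
    simp [mul_sub, sub_mul, Algebra.algebraMap_eq_smul_one, ← mul_assoc, ← star_mul,
      neg_add_eq_sub]
  refine ⟨-μ, hconj ▸ star_left_conjugate_nonneg hnn _, hconj ▸ fun hu => hnu ?_⟩
  rw [Units.isUnit_mul_units, ← Units.coe_star, Units.isUnit_units_mul] at hu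
  exact hu

end CFC

namespace Matrix

variable {K : Type*} [Field K]

theorem rank_eq_zero_iff {m n : Type*} [Fintype n] [Finite m] {A : Matrix m n K} :
    A.rank = 0 ↔ A = 0 := by
  classical
  rw [rank, Submodule.finrank_eq_zero, LinearMap.range_eq_bot, ← toLin'_apply',
    LinearEquiv.map_eq_zero_iff]

theorem isUnit_of_rank_eq_card {n : Type*} [Fintype n] [DecidableEq n] {A : Matrix n n K}
    (h : A.rank = Fintype.card n) : IsUnit A := by
  rw [← mulVec_surjective_iff_isUnit, ← coe_mulVecLin, ← LinearMap.range_eq_top]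
  exact Submodule.eq_top_of_finrank_eq (by rw [Module.finrank_fintype_fun_eq_card]; exact h)

theorem rank_eq_one_of_ne_zero_of_not_isUnit {A : Matrix (Fin 2) (Fin 2) K} (h0 : A ≠ 0)
    (hu : ¬IsUnit A) : A.rank = 1 := by
  have h2 : A.rank ≠ 2 := fun h => hu (isUnit_of_rank_eq_card (by simpa using h))
  have hle : A.rank ≤ 2 := A.rank_le_width
  have hne : A.rank ≠ 0 := rank_eq_zero_iff.not.mpr h0
  omega

end Matrix

/-- Let `R, S` be Hermitian `2 × 2` complex matrices with `R` positive semidefinite with trivial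
kernel, and `S` not a real scalar multiple of `R`. Then there exists `λ₀ ∈ ℝ` such that
`λ₀ • R + S` is positive semidefinite of rank exactly `1`. -/
theorem stmt_10 (R S : Matrix (Fin 2) (Fin 2) ℂ)
    (hR : R.PosSemidef) (hker : ∀ v : Fin 2 → ℂ, R.mulVec v = 0 → v = 0)
    (hS : S.IsHermitian) (hSR : ∀ x : ℝ, S ≠ x • R) :
    ∃ lam : ℝ, (lam • R + S).PosSemidef ∧ (lam • R + S).rank = 1 := by
  open scoped MatrixOrder in
  have hinj : Function.Injective R.mulVec := fun v w h =>
    sub_eq_zero.mp (hker _ (by rw [mulVec_sub, h, sub_self]))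
  have hRpos : IsStrictlyPositive R :=
    (mulVec_injective_iff_isUnit.mp hinj).isStrictlyPositive hR.nonneg
  obtain ⟨lam, hnn, hnu⟩ := hRpos.exists_nonneg_not_isUnit_smul_add hS.isSelfAdjoint
  refine ⟨lam, hnn.posSemidef, rank_eq_one_of_ne_zero_of_not_isUnit (fun h => hSR (-lam) ?_) hnu⟩
  rw [neg_smul, eq_neg_iff_add_eq_zero, add_comm, h]
end

section
/- Matricial Richter–Tchakaloff theorem: Let (X, 𝔛) be a measurable space, E a finite-dimensional real vector space of measurable maps F : X → H_q, μ a positive H_q-valued measure with E ⊆ L¹(μ; H_q), and Λ(F) = ∫⟨F, dμ⟩ the associated nonzero moment functional. Then there exist N ≤ dim E, points x_1,…,x_N ∈ X, and nonzero vectors v_1,…,v_N ∈ ℂ^q such that Λ(F) = Σ_{j=1}^N v_j* F(x_j) v_j for all F ∈ E. Moreover, if Y ∈ 𝔛 satisfies μ(X∖Y) = 0, the points x_j can be chosen in Y. -/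
open Matrix MeasureTheory ComplexOrder

/-- A positive `H_q`-valued measure on `(X, 𝔛)`, given by its trace measure `τ` together with a
measurable, pointwise positive semidefinite Radon–Nikodym matrix `Φ`. -/
structure MatMeasure (X : Type*) [MeasurableSpace X] (q : ℕ) where
  τ : Measure X
  Φ : X → Matrix (Fin q) (Fin q) ℂ
  measurable_entry : ∀ i j, Measurable fun x => Φ x i j
  posSemidef : ∀ x, (Φ x).PosSemidef

/-!
Factor `Φ(x) = B Bᴴ`; summing over the columns `b` of `B` gives
`⟨F(x), Φ(x)⟩ = Σ_b b* F(x) b`, so for almost every `x` the density functional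
`F ↦ ⟨F(x), Φ(x)⟩` on `E` lies in the convex cone of `E*` generated by the functionals
`F ↦ v* F(y) v` with `y ∈ Y` and `v ≠ 0`. The moment functional `Λ` is the (weak) integral of
this density, and in finite dimensions the integral of a map with values a.e. in a convex cone
lies in that cone (Richter). Carathéodory's theorem for cones then writes `Λ` as a positive
combination of at most `dim E* = dim E` generators, and the weights are absorbed into the
vectors `v`.
-/

namespace PointedCone

variable {V : Type*} [AddCommGroup V] [Module ℝ V]

lemma mem_hull_finset_iff {t : Finset V} {x : V} :
    x ∈ hull ℝ (t : Set V) ↔ ∃ c : V → ℝ, (∀ w ∈ t, 0 ≤ c w) ∧ ∑ w ∈ t, c w • w = x := by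
  constructor
  · intro hx
    obtain ⟨c, -, rfl⟩ := Submodule.mem_span_finset.1 hx
    exact ⟨fun w => c w, fun w _ => (c w).2, rfl⟩
  · rintro ⟨c, hc, rfl⟩
    exact Submodule.sum_mem _ fun w hw => smul_mem _ (hc w hw) (subset_hull hw)

/-- The reduction step of Carathéodory's theorem: a linear relation among the generators
lets one shift the coefficients until one of them vanishes. -/
lemma exists_mem_hull_erase_of_finrank_lt_card [FiniteDimensional ℝ V] [DecidableEq V]
    {t : Finset V} {x : V} (ht : Module.finrank ℝ V < t.card) (hx : x ∈ hull ℝ (t : Set V)) :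
    ∃ y ∈ t, x ∈ hull ℝ (t.erase y : Set V) := by
  obtain ⟨c, hc, rfl⟩ := mem_hull_finset_iff.1 hx
  obtain ⟨g, hg, hpos⟩ : ∃ g : V → ℝ, ∑ w ∈ t, g w • w = 0 ∧ (t.filter (0 < g ·)).Nonempty := by
    obtain ⟨g, hg, w, hw, hgw⟩ := Module.exists_nontrivial_relation_of_finrank_lt_card ht
    rcases hgw.lt_or_gt with hneg | hpos
    · refine ⟨-g, by simp [neg_smul, hg], w, Finset.mem_filter.2 ⟨hw, by simpa using hneg⟩⟩
    · exact ⟨g, hg, w, Finset.mem_filter.2 ⟨hw, hpos⟩⟩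
  obtain ⟨y, hy, hmin⟩ := (t.filter (0 < g ·)).exists_min_image (fun w => c w / g w) hpos
  rw [Finset.mem_filter] at hy
  set r := c y / g y
  have hc' : ∀ w ∈ t, 0 ≤ c w - r * g w := by
    intro w hw
    rcases le_or_gt (g w) 0 with hgw | hgw
    · linarith [hc w hw, mul_nonpos_of_nonneg_of_nonpos (div_nonneg (hc y hy.1) hy.2.le) hgw]
    · linarith [(le_div_iff₀ hgw).1 (hmin w (Finset.mem_filter.2 ⟨hw, hgw⟩))]
  have hcy : c y - r * g y = 0 := by simp [r, div_mul_cancel₀ _ hy.2.ne']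
  refine ⟨y, hy.1, mem_hull_finset_iff.2 ⟨fun w => c w - r * g w,
    fun w hw => hc' w (Finset.mem_of_mem_erase hw), ?_⟩⟩
  rw [Finset.sum_erase _ (by simp only [hcy, zero_smul])]
  simp only [sub_smul, Finset.sum_sub_distrib, mul_smul, ← Finset.smul_sum, hg, smul_zero,
    sub_zero]

lemma exists_subset_card_le_finrank_of_mem_hull [FiniteDimensional ℝ V] {x : V} (t : Finset V)
    (hx : x ∈ hull ℝ (t : Set V)) :
    ∃ u ⊆ t, u.card ≤ Module.finrank ℝ V ∧ x ∈ hull ℝ (u : Set V) := by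
  classical
  induction t using Finset.strongInduction with
  | H t ih =>
    by_cases hcard : t.card ≤ Module.finrank ℝ V
    · exact ⟨t, subset_rfl, hcard, hx⟩
    · obtain ⟨y, hy, hxy⟩ := exists_mem_hull_erase_of_finrank_lt_card (not_le.1 hcard) hx
      obtain ⟨u, hu, hcard, hxu⟩ := ih _ (Finset.erase_ssubset hy) hxy
      exact ⟨u, hu.trans (Finset.erase_subset _ _), hcard, hxu⟩

/-- **Carathéodory's theorem** for convex cones. -/
theorem exists_fin_sum_of_mem_hull [FiniteDimensional ℝ V] {S : Set V} {x : V}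
    (hx : x ∈ hull ℝ S) :
    ∃ N ≤ Module.finrank ℝ V, ∃ (c : Fin N → ℝ) (p : Fin N → V),
      (∀ j, 0 < c j) ∧ (∀ j, p j ∈ S) ∧ x = ∑ j, c j • p j := by
  classical
  obtain ⟨t, htS, hxt⟩ := Submodule.mem_span_finite_of_mem_span hx
  obtain ⟨u, hut, hcard, hxu⟩ := exists_subset_card_le_finrank_of_mem_hull t hxt
  obtain ⟨c, hc, rfl⟩ := mem_hull_finset_iff.1 hxu
  set u' := u.filter (0 < c ·)
  have hsum : ∑ w ∈ u, c w • w = ∑ w : u', c w • (w : V) := by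
    rw [Finset.sum_coe_sort u' (fun w => c w • w), Finset.sum_filter_of_ne]
    intro w hw hne
    exact (hc w hw).lt_of_ne fun h => hne (by rw [← h, zero_smul])
  let e := u'.equivFin.symm
  refine ⟨u'.card, (Finset.card_filter_le _ _).trans hcard, fun j => c (e j), fun j => e j,
    fun j => (Finset.mem_filter.1 (e j).2).2,
    fun j => htS (hut (Finset.mem_of_mem_filter _ (e j).2)), ?_⟩
  rw [hsum]
  exact (e.sum_comp fun w => c w • (w : V)).symm

lemma exists_dual_pos_of_notMem_of_span_eq_top {V : Type*} [NormedAddCommGroup V]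
    [NormedSpace ℝ V] [FiniteDimensional ℝ V] {C : PointedCone ℝ V}
    (hC : Submodule.span ℝ (C : Set V) = ⊤) {x : V} (hx : x ∉ C) :
    ∃ f : Module.Dual ℝ V, (∀ y ∈ C, 0 ≤ f y) ∧ f x ≤ 0 ∧ ∃ y ∈ C, 0 < f y := by
  have hint : (interior (C : Set V)).Nonempty := by
    rw [C.convex.interior_nonempty_iff_affineSpan_eq_top,
      AffineSubspace.affineSpan_eq_top_iff_vectorSpan_eq_top_of_nonempty ℝ V V ⟨0, C.zero_mem⟩,
      vectorSpan_eq_span_vsub_set_right ℝ C.zero_mem]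
    simpa using hC
  obtain ⟨g, hg0, hg⟩ := geometric_hahn_banach_of_nonempty_interior_point C.convex
    (fun h => hx (interior_subset h)) hint
  have hgC : ∀ y ∈ C, g y ≤ 0 := by
    intro y hy
    by_contra! hpos
    have := hg (((|g x| + 1) / g y) • y) (C.smul_mem (by positivity) hy)
    rw [map_smul, smul_eq_mul, div_mul_cancel₀ _ hpos.ne'] at this
    linarith [le_abs_self (g x)]
  obtain ⟨y, hy, hgy⟩ : ∃ y ∈ C, g y ≠ 0 := by
    by_contra! h
    refine hg0 (ContinuousLinearMap.coe_injective (LinearMap.ker_eq_top.1 (top_le_iff.1 ?_)))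
    rw [← hC, Submodule.span_le]
    exact h
  refine ⟨-(g : V →ₗ[ℝ] ℝ), fun z hz => by simpa using hgC z hz, ?_, y, hy, ?_⟩
  · simpa using hg 0 C.zero_mem
  · simpa using (hgC y hy).lt_of_ne hgy

/-- Pass to coordinates on the span of `C`, where `C` is full-dimensional, and extend the
separating functional from there. -/
lemma exists_dual_pos_of_notMem {V : Type*} [AddCommGroup V] [Module ℝ V]
    [FiniteDimensional ℝ V] {C : PointedCone ℝ V} {x : V}
    (hxC : x ∈ Submodule.span ℝ (C : Set V)) (hx : x ∉ C) :
    ∃ f : Module.Dual ℝ V, (∀ y ∈ C, 0 ≤ f y) ∧ f x ≤ 0 ∧ ∃ y ∈ C, 0 < f y := by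
  set W := Submodule.span ℝ (C : Set V)
  let e := (Module.finBasis ℝ W).equivFun
  set D : PointedCone ℝ (Fin (Module.finrank ℝ W) → ℝ) :=
    PointedCone.map e.toLinearMap (PointedCone.comap W.subtype C)
  have hmemD : ∀ y : W, e y ∈ D ↔ (y : V) ∈ C := fun y => by
    simp [D, PointedCone.mem_map, PointedCone.mem_comap]
  have hD : Submodule.span ℝ (D : Set (Fin (Module.finrank ℝ W) → ℝ)) = ⊤ := by
    rw [PointedCone.coe_map, PointedCone.coe_comap, Submodule.span_image,
      Submodule.coe_subtype, Submodule.span_span_coe_preimage, Submodule.map_top,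
      LinearEquiv.range]
  obtain ⟨g, hgD, hgx, z, hzD, hgz⟩ :=
    exists_dual_pos_of_notMem_of_span_eq_top hD (x := e ⟨x, hxC⟩) (by rwa [hmemD])
  obtain ⟨f, hf⟩ := LinearMap.exists_extend (g ∘ₗ e.toLinearMap)
  have hfW : ∀ y : W, f y = g (e y) := fun y => LinearMap.congr_fun hf y
  refine ⟨f, fun y hy => ?_, by simpa [hfW ⟨x, hxC⟩] using hgx, e.symm z, ?_, ?_⟩
  · rw [show y = ((⟨y, Submodule.subset_span hy⟩ : W) : V) from rfl, hfW]
    exact hgD _ ((hmemD _).2 hy)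
  · rwa [← hmemD, LinearEquiv.apply_symm_apply]
  · rwa [hfW, LinearEquiv.apply_symm_apply]

end PointedCone

section WeakIntegral

variable {X V : Type*} [MeasurableSpace X] [AddCommGroup V] [Module ℝ V]

def HasWeakIntegral (L : X → V) (ν : Measure X) (Λ : V) : Prop :=
  ∀ φ : Module.Dual ℝ V, Integrable (fun x => φ (L x)) ν ∧ ∫ x, φ (L x) ∂ν = φ Λ

variable {L : X → V} {ν : Measure X} {Λ : V}

lemma HasWeakIntegral.mem_of_ae_mem_submodule (h : HasWeakIntegral L ν Λ) {W : Submodule ℝ V}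
    (hW : ∀ᵐ x ∂ν, L x ∈ W) : Λ ∈ W := by
  by_contra hΛ
  obtain ⟨f, hfΛ, hfW⟩ := W.exists_dual_map_eq_bot_of_notMem hΛ inferInstance
  refine hfΛ ((h f).2.symm.trans (integral_eq_zero_of_ae ?_))
  filter_upwards [hW] with x hx
  simpa [hfW] using Submodule.mem_map_of_mem (f := f) hx

/-- **Richter's theorem**, in cone form. By induction on the dimension of the span of `C`: a
functional separating `Λ` from `C` is nonnegative along `L` with nonpositive integral, so it
vanishes a.e. along `L`, which confines `L` to the smaller cone `C ⊓ ker f`. -/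
theorem HasWeakIntegral.mem_of_ae_mem [FiniteDimensional ℝ V] (h : HasWeakIntegral L ν Λ)
    {C : PointedCone ℝ V} (hC : ∀ᵐ x ∂ν, L x ∈ C) : Λ ∈ C := by
  induction hn : Module.finrank ℝ (Submodule.span ℝ (C : Set V)) using Nat.strong_induction_on
    generalizing C with
  | _ n ih =>
  by_contra hΛ
  have hΛspan := h.mem_of_ae_mem_submodule (W := Submodule.span ℝ (C : Set V))
    (hC.mono fun x hx => Submodule.subset_span hx)
  obtain ⟨f, hfC, hfΛ, y, hyC, hfy⟩ := PointedCone.exists_dual_pos_of_notMem hΛspan hΛ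
  have hf_nonneg : 0 ≤ᵐ[ν] fun x => f (L x) := hC.mono fun x hx => hfC _ hx
  have hf_zero : (fun x => f (L x)) =ᵐ[ν] 0 :=
    (integral_eq_zero_iff_of_nonneg_ae hf_nonneg (h f).1).1
      (le_antisymm ((h f).2.trans_le hfΛ) (integral_nonneg_of_ae hf_nonneg))
  set C' : PointedCone ℝ V := C ⊓ PointedCone.ofSubmodule (LinearMap.ker f)
  have hlt : Submodule.span ℝ (C' : Set V) < Submodule.span ℝ (C : Set V) := by
    refine lt_of_le_of_ne (Submodule.span_mono inf_le_left) fun heq => ?_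
    have hker : Submodule.span ℝ (C' : Set V) ≤ LinearMap.ker f :=
      Submodule.span_le.2 fun z hz => hz.2
    exact hfy.ne' (hker (heq ▸ Submodule.subset_span hyC))
  refine hΛ (ih _ (hn ▸ Submodule.finrank_lt_finrank_of_lt hlt) (C := C') ?_ rfl).1
  filter_upwards [hC, hf_zero] with x hxC hfx
  exact ⟨hxC, hfx⟩

end WeakIntegral

namespace Matrix

variable {n : Type*} [Fintype n]

lemma trace_mul_mul_conjTranspose (M B : Matrix n n ℂ) :
    (M * (B * Bᴴ)).trace = ∑ r, star (Bᵀ r) ⬝ᵥ M *ᵥ Bᵀ r := by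
  rw [← Matrix.mul_assoc, trace_mul_cycle, trace]
  refine Finset.sum_congr rfl fun r _ => ?_
  simp [Matrix.mul_apply, dotProduct, mulVec, Finset.mul_sum, mul_assoc]

lemma PosSemidef.exists_trace_mul_eq_sum {A : Matrix n n ℂ} (hA : A.PosSemidef) :
    ∃ w : n → n → ℂ, ∀ M : Matrix n n ℂ, (M * A).trace = ∑ r, star (w r) ⬝ᵥ M *ᵥ w r := by
  classical
  open scoped MatrixOrder in
  obtain ⟨B, rfl⟩ := CStarAlgebra.nonneg_iff_eq_star_mul_self.mp hA.nonneg
  refine ⟨(star B)ᵀ, fun M => ?_⟩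
  rw [← trace_mul_mul_conjTranspose, star_eq_conjTranspose, conjTranspose_conjTranspose]

end Matrix

section QuadEval

variable {X n : Type*} [Fintype n] (E : Submodule ℝ (X → Matrix n n ℂ))

def quadEval (x : X) (u : n → ℂ) : Module.Dual ℝ E where
  toFun F := (star u ⬝ᵥ (F : X → Matrix n n ℂ) x *ᵥ u).re
  map_add' F G := by simp [add_mulVec, dotProduct_add]
  map_smul' r F := by simp [smul_mulVec, dotProduct_smul]

@[simp]
lemma quadEval_apply (x : X) (u : n → ℂ) (F : E) :
    quadEval E x u F = (star u ⬝ᵥ (F : X → Matrix n n ℂ) x *ᵥ u).re :=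
  rfl

@[simp]
lemma quadEval_zero (x : X) : quadEval E x 0 = 0 := by
  ext F; simp

lemma quadEval_smul (x : X) (u : n → ℂ) (r : ℝ) :
    quadEval E x (r • u) = r ^ 2 • quadEval E x u := by
  ext F
  simp [mulVec_smul, dotProduct_smul, smul_dotProduct, sq, mul_assoc]

lemma Matrix.PosSemidef.exists_mem_hull_quadEval {A : Matrix n n ℂ} (hA : A.PosSemidef) (x : X) :
    ∃ φ ∈ PointedCone.hull ℝ {φ | ∃ u ≠ 0, quadEval E x u = φ},
      ∀ F : E, φ F = (((F : X → Matrix n n ℂ) x * A).trace).re := by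
  obtain ⟨w, hw⟩ := hA.exists_trace_mul_eq_sum
  refine ⟨∑ r, quadEval E x (w r), Submodule.sum_mem _ fun r _ => ?_,
    fun F => by simp [hw, Complex.re_sum]⟩
  by_cases hr : w r = 0
  · simp [hr]
  · exact PointedCone.subset_hull ⟨w r, hr, rfl⟩

end QuadEval

namespace MatMeasure

variable {X : Type*} [MeasurableSpace X] {q : ℕ} (μ : MatMeasure X q)
  (E : Submodule ℝ (X → Matrix (Fin q) (Fin q) ℂ))
  (hint : ∀ F ∈ E, Integrable (fun x => ((F x * μ.Φ x).trace).re) μ.τ)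

noncomputable def momentFunctional : Module.Dual ℝ E where
  toFun F := ∫ x, (((F : X → Matrix (Fin q) (Fin q) ℂ) x * μ.Φ x).trace).re ∂μ.τ
  map_add' F G := by
    simp only [Submodule.coe_add, Pi.add_apply, add_mul, trace_add, Complex.add_re]
    exact integral_add (hint _ F.2) (hint _ G.2)
  map_smul' r F := by
    simp only [Submodule.coe_smul, Pi.smul_apply, smul_mul, trace_smul, Complex.smul_re]
    exact integral_const_mul r _

@[simp]
lemma momentFunctional_apply (F : E) :
    μ.momentFunctional E hint F =
      ∫ x, (((F : X → Matrix (Fin q) (Fin q) ℂ) x * μ.Φ x).trace).re ∂μ.τ :=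
  rfl

lemma hasWeakIntegral_momentFunctional [FiniteDimensional ℝ E] {L : X → Module.Dual ℝ E}
    (hL : ∀ x (F : E), L x F = (((F : X → Matrix (Fin q) (Fin q) ℂ) x * μ.Φ x).trace).re) :
    HasWeakIntegral L μ.τ (μ.momentFunctional E hint) := by
  intro φ
  obtain ⟨F, rfl⟩ := (Module.evalEquiv ℝ E).surjective φ
  simp only [Module.evalEquiv_apply, Module.Dual.eval_apply, hL]
  exact ⟨hint _ F.2, rfl⟩

end MatMeasure

theorem stmt_12_general {X : Type*} [MeasurableSpace X] {q : ℕ}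
    (E : Submodule ℝ (X → Matrix (Fin q) (Fin q) ℂ)) [FiniteDimensional ℝ E]
    (μ : MatMeasure X q)
    (hint : ∀ F ∈ E, Integrable (fun x => ((F x * μ.Φ x).trace).re) μ.τ)
    (Y : Set X)
    (hμY : ∀ᵐ x ∂μ.τ, x ∉ Y → μ.Φ x = 0) :
    ∃ N : ℕ, N ≤ Module.finrank ℝ E ∧
      ∃ (pts : Fin N → X) (v : Fin N → (Fin q → ℂ)),
        (∀ j, pts j ∈ Y) ∧ (∀ j, v j ≠ 0) ∧
        ∀ F ∈ E, ∫ x, ((F x * μ.Φ x).trace).re ∂μ.τ =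
          ∑ j, (star (v j) ⬝ᵥ (F (pts j)).mulVec (v j)).re := by
  choose L hLhull hL using fun x => (μ.posSemidef x).exists_mem_hull_quadEval E x
  have hLS : ∀ᵐ x ∂μ.τ,
      L x ∈ PointedCone.hull ℝ {φ | ∃ x ∈ Y, ∃ u ≠ 0, quadEval E x u = φ} := by
    filter_upwards [hμY] with x hx
    by_cases hxY : x ∈ Y
    · refine Submodule.span_mono ?_ (hLhull x)
      rintro φ ⟨u, hu, rfl⟩
      exact ⟨x, hxY, u, hu, rfl⟩
    · rw [show L x = 0 from LinearMap.ext fun F => by simp [hL, hx hxY]]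
      exact zero_mem _
  obtain ⟨N, hN, c, p, hc, hpS, hsum⟩ := PointedCone.exists_fin_sum_of_mem_hull
    ((μ.hasWeakIntegral_momentFunctional E hint hL).mem_of_ae_mem hLS)
  choose x hxY u hu hpu using hpS
  have hcp : ∀ j, c j • p j = quadEval E (x j) (Real.sqrt (c j) • u j) := fun j => by
    rw [quadEval_smul, Real.sq_sqrt (hc j).le, hpu]
  refine ⟨N, hN.trans_eq Subspace.dual_finrank_eq, x, fun j => Real.sqrt (c j) • u j, hxY,
    fun j => smul_ne_zero (Real.sqrt_pos.2 (hc j)).ne' (hu j), fun F hF => ?_⟩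
  simpa [hcp] using LinearMap.congr_fun hsum ⟨F, hF⟩

/-- Matricial Richter–Tchakaloff theorem: if `E` is a finite-dimensional real vector space of
measurable Hermitian-matrix-valued maps, `μ` a positive `H_q`-valued measure with
`E ⊆ L¹(μ; H_q)` and nonzero moment functional `Λ(F) = ∫ ⟨F, dμ⟩`, and `Y` a measurable set
with `μ(X \ Y) = 0`, then there are `N ≤ dim E` points `x_j ∈ Y` and nonzero vectors
`v_j ∈ ℂ^q` with `Λ(F) = Σ_j v_j* F(x_j) v_j` for all `F ∈ E`. -/
theorem stmt_12 {X : Type*} [MeasurableSpace X] [MeasurableSingletonClass X] {q : ℕ}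
    (E : Submodule ℝ (X → Matrix (Fin q) (Fin q) ℂ)) [FiniteDimensional ℝ E]
    (hmeas : ∀ F ∈ E, ∀ i j, Measurable fun x => F x i j)
    (hherm : ∀ F ∈ E, ∀ x, (F x).IsHermitian)
    (μ : MatMeasure X q)
    (hint : ∀ F ∈ E, Integrable (fun x => ((F x * μ.Φ x).trace).re) μ.τ)
    (hΛ : ∃ F ∈ E, ∫ x, ((F x * μ.Φ x).trace).re ∂μ.τ ≠ 0)
    (Y : Set X) (hY : MeasurableSet Y)
    (hμY : ∀ᵐ x ∂μ.τ, x ∉ Y → μ.Φ x = 0) :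
    ∃ N : ℕ, N ≤ Module.finrank ℝ E ∧
      ∃ (pts : Fin N → X) (v : Fin N → (Fin q → ℂ)),
        (∀ j, pts j ∈ Y) ∧ (∀ j, v j ≠ 0) ∧
        ∀ F ∈ E, ∫ x, ((F x * μ.Φ x).trace).re ∂μ.τ =
          ∑ j, (star (v j) ⬝ᵥ (F (pts j)).mulVec (v j)).re :=
  stmt_12_general E μ hint Y hμY
end

section
/- Every strictly E_⪰-positive linear functional on E is a moment functional; moreover, for any strictly E_⪰-positive Λ, any point x ∈ X, and any positive semidefinite matrix M ∈ H_q, there exist a finitely atomic representing measure ν of Λ and ε > 0 such that ν({x}) ⪰ εM. -/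
open Matrix MeasureTheory ComplexOrder

/-- `μ` is a representing measure for the functional `Λ` on `E`:
every `F ∈ E` is `μ`-integrable and `Λ(F) = ∫ ⟨F, dμ⟩ = ∫ ⟨F, Φ⟩ dτ`. -/
def Represents {X : Type*} [MeasurableSpace X] {q : ℕ}
    (E : Submodule ℝ (X → Matrix (Fin q) (Fin q) ℂ)) (Λ : E →ₗ[ℝ] ℝ)
    (μ : MatMeasure X q) : Prop :=
  (∀ F : E, Integrable
      (fun x => (((F : X → Matrix (Fin q) (Fin q) ℂ) x * μ.Φ x).trace).re) μ.τ) ∧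
  ∀ F : E, Λ F = ∫ x, (((F : X → Matrix (Fin q) (Fin q) ℂ) x * μ.Φ x).trace).re ∂μ.τ

/-!
The functionals `F ↦ Re tr(F(x) A)` with `A ⪰ 0` generate a convex cone in the dual of `E` whose
dual cone is `E_⪰`. Strict positivity on the closed cone `E_⪰` gives, by compactness of the unit
sphere, a bound `Λ(F) ≥ δ‖F‖` on `E_⪰`, so a whole ball around `Λ` lies in the closure of the
cone. In finite dimension a convex set and its closure have the same interior, hence
`Λ - ε ℓ_{x₀,M}` is still a finite conic combination of point evaluations for small `ε > 0`;
adding back the atom `ε M δ_{x₀}` gives the required finitely atomic representing measure.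
-/

open scoped RealInnerProductSpace

section FiniteDimensional

variable {V : Type*} [NormedAddCommGroup V] [NormedSpace ℝ V] [FiniteDimensional ℝ V]

theorem Convex.interior_closure_eq_interior {s : Set V} (hs : Convex ℝ s) :
    interior (closure s) = interior s := by
  refine subset_antisymm ?_ (interior_mono subset_closure)
  rcases (interior (closure s)).eq_empty_or_nonempty with h | h
  · simp [h]
  rw [hs.closure.interior_nonempty_iff_affineSpan_eq_top] at h
  rw [hs.interior_closure_eq_interior_of_nonempty_interior]
  rw [hs.interior_nonempty_iff_affineSpan_eq_top]
  refine top_unique (h ▸ affineSpan_le.mpr ?_)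
  exact closure_minimal (subset_affineSpan ℝ s) (affineSpan ℝ s).closed_of_finiteDimensional

theorem ProperCone.exists_pos_mul_norm_le (K : ProperCone ℝ V) (f : V →L[ℝ] ℝ)
    (hf : ∀ y ∈ K, y ≠ 0 → 0 < f y) : ∃ δ > 0, ∀ y ∈ K, δ * ‖y‖ ≤ f y := by
  obtain ⟨δ, hδ, hδf⟩ := ((isCompact_sphere (0 : V) 1).inter_left K.isClosed).exists_forall_le'
    f.continuous.continuousOn (a := 0) fun y ⟨hyK, hy⟩ =>
      hf y hyK (ne_zero_of_mem_unit_sphere ⟨y, hy⟩)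
  refine ⟨δ, hδ, fun y hy => ?_⟩
  rcases eq_or_ne y 0 with rfl | hy0
  · simp
  have hny : 0 < ‖y‖ := norm_pos_iff.mpr hy0
  have := hδf (‖y‖⁻¹ • y) ⟨K.smul_mem hy (by positivity), by simp [norm_smul, hny.ne']⟩
  rw [map_smul, smul_eq_mul, le_inv_mul_iff₀ hny] at this
  linarith [mul_comm δ ‖y‖]

end FiniteDimensional

section InnerProductSpace

variable {V : Type*} [NormedAddCommGroup V] [InnerProductSpace ℝ V]

theorem ball_subset_closure_hull_of_mul_norm_le_inner [CompleteSpace V] {s : Set V} {p : V}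
    {δ : ℝ} (h : ∀ y ∈ ProperCone.innerDual s, δ * ‖y‖ ≤ ⟪p, y⟫) :
    Metric.ball p δ ⊆ closure (PointedCone.hull ℝ s) := by
  intro w hw
  by_contra hw'
  obtain ⟨y, hy, hwy⟩ :=
    ProperCone.hyperplane_separation' (Submodule.closure (PointedCone.hull ℝ s)) hw'
  have hy0 : y ≠ 0 := by rintro rfl; simp at hwy
  have hys : y ∈ ProperCone.innerDual s := fun x hx =>
    hy x (subset_closure (PointedCone.subset_hull hx))
  have hpw : ⟪p - w, y⟫ < δ * ‖y‖ := by
    refine (real_inner_le_norm _ _).trans_lt (mul_lt_mul_of_pos_right ?_ (norm_pos_iff.mpr hy0))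
    rwa [← dist_eq_norm, dist_comm]
  have := h y hys
  rw [← sub_add_cancel p w, inner_add_left] at this
  linarith

variable [FiniteDimensional ℝ V]

theorem mem_interior_hull_of_inner_pos {s : Set V} {p : V}
    (h : ∀ y ∈ ProperCone.innerDual s, y ≠ 0 → 0 < ⟪p, y⟫) :
    p ∈ interior (PointedCone.hull ℝ s : Set V) := by
  obtain ⟨δ, hδ, hδp⟩ := (ProperCone.innerDual s).exists_pos_mul_norm_le (innerSL ℝ p) h
  rw [← (PointedCone.hull ℝ s).convex.interior_closure_eq_interior]
  exact mem_interior.mpr ⟨_, ball_subset_closure_hull_of_mul_norm_le_inner hδp,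
    Metric.isOpen_ball, Metric.mem_ball_self hδ⟩

theorem exists_sub_smul_mem_hull_of_inner_pos {s : Set V} {p : V}
    (h : ∀ y ∈ ProperCone.innerDual s, y ≠ 0 → 0 < ⟪p, y⟫) (g : V) :
    ∃ ε : ℝ, 0 < ε ∧ p - ε • g ∈ PointedCone.hull ℝ s := by
  have hcont : Continuous fun ε : ℝ => p - ε • g := by fun_prop
  have := (hcont.tendsto' 0 p (by simp)).eventually (isOpen_interior.mem_nhds
    (mem_interior_hull_of_inner_pos h))
  obtain ⟨ε, hmem, hε⟩ := ((this.filter_mono nhdsWithin_le_nhds).and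
    (self_mem_nhdsWithin (s := Set.Ioi 0))).exists
  exact ⟨ε, hε, interior_subset hmem⟩

end InnerProductSpace

theorem Module.Dual.exists_sub_smul_mem_hull_of_pos {W : Type*} [AddCommGroup W] [Module ℝ W]
    [FiniteDimensional ℝ W] {S : Set (Module.Dual ℝ W)} {Λ : Module.Dual ℝ W}
    (h : ∀ w ≠ 0, (∀ φ ∈ S, 0 ≤ φ w) → 0 < Λ w) (φ₀ : Module.Dual ℝ W) :
    ∃ ε : ℝ, 0 < ε ∧ Λ - ε • φ₀ ∈ PointedCone.hull ℝ S := by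
  let V := EuclideanSpace ℝ (Fin (Module.finrank ℝ W))
  let T : W ≃ₗ[ℝ] V := LinearEquiv.ofFinrankEq _ _ (by simp [V])
  let R : Module.Dual ℝ W ≃ₗ[ℝ] V := T.symm.dualMap ≪≫ₗ
    (LinearMap.toContinuousLinearMap ≪≫ₗ (InnerProductSpace.toDual ℝ V).symm.toLinearEquiv)
  have hR (φ : Module.Dual ℝ W) (y : V) : ⟪R φ, y⟫ = φ (T.symm y) :=
    InnerProductSpace.toDual_symm_apply
  have hpos : ∀ y ∈ ProperCone.innerDual (R '' S), y ≠ 0 → 0 < ⟪R Λ, y⟫ := by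
    rintro y hy hy0
    rw [hR]
    refine h _ (by simpa using hy0) fun φ hφ => ?_
    rw [← hR]
    exact hy ⟨φ, hφ, rfl⟩
  obtain ⟨ε, hε, hmem⟩ := exists_sub_smul_mem_hull_of_inner_pos hpos (R φ₀)
  refine ⟨ε, hε, ?_⟩
  rw [← map_smul, ← map_sub] at hmem
  have hhull :
      PointedCone.hull ℝ (R '' S) ≤ (PointedCone.hull ℝ S).comap (R.symm : V →ₗ[ℝ] _) :=
    Submodule.span_le.mpr <| by
      rintro _ ⟨φ, hφ, rfl⟩
      simpa using PointedCone.subset_hull hφ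
  simpa using hhull hmem

theorem Matrix.IsHermitian.posSemidef_of_re_trace_mul_nonneg {n 𝕜 : Type*} [Fintype n]
    [RCLike 𝕜] {H : Matrix n n 𝕜} (hH : H.IsHermitian)
    (h : ∀ A : Matrix n n 𝕜, A.PosSemidef → 0 ≤ RCLike.re (H * A).trace) : H.PosSemidef := by
  refine .of_dotProduct_mulVec_nonneg hH fun v =>
    RCLike.nonneg_iff.mpr ⟨?_, hH.im_star_dotProduct_mulVec_self v⟩
  simpa [mul_vecMulVec, trace_vecMulVec, dotProduct_comm] using
    h _ (posSemidef_vecMulVec_self_star v)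

theorem Fin.sum_filter_cons_eq {α β : Type*} [DecidableEq α] [AddCommMonoid β] {k : ℕ}
    (a : α) (b : β) (f : Fin k → α) (g : Fin k → β) :
    ∑ j ∈ Finset.univ.filter (fun j => (Fin.cons a f : Fin (k + 1) → α) j = a),
        (Fin.cons b g : Fin (k + 1) → β) j =
      b + ∑ j ∈ Finset.univ.filter (fun j => f j = a), g j := by
  simp [Finset.sum_filter, Fin.sum_univ_succ]

section traceEval

variable {X n : Type*} [Fintype n] (E : Submodule ℝ (X → Matrix n n ℂ))

def traceEval (x : X) (A : Matrix n n ℂ) : Module.Dual ℝ E where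
  toFun F := ((F : X → Matrix n n ℂ) x * A).trace.re
  map_add' F G := by simp [add_mul]
  map_smul' c F := by simp [smul_mul]

@[simp] theorem traceEval_apply (x : X) (A : Matrix n n ℂ) (F : E) :
    traceEval E x A F = ((F : X → Matrix n n ℂ) x * A).trace.re := rfl

theorem smul_traceEval (c : ℝ) (x : X) (A : Matrix n n ℂ) :
    c • traceEval E x A = traceEval E x (c • A) := by
  ext F; simp

end traceEval

section atoms
variable {X : Type*} [MeasurableSpace X] [MeasurableSingletonClass X] [DecidableEq X] {q k : ℕ}

noncomputable def MatMeasure.ofAtoms (pts : Fin k → X) (Mats : Fin k → Matrix (Fin q) (Fin q) ℂ)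
    (hMats : ∀ j, (Mats j).PosSemidef) : MatMeasure X q where
  τ := ∑ x ∈ Finset.univ.image pts, Measure.dirac x
  Φ x := ∑ j ∈ Finset.univ.filter (pts · = x), Mats j
  measurable_entry i i' := by
    simp only [Matrix.sum_apply, Finset.sum_filter]
    refine Finset.measurable_sum _ fun j _ => Measurable.ite ?_ measurable_const measurable_const
    simp [eq_comm]
  posSemidef _ := posSemidef_sum _ fun j _ => hMats j

theorem MatMeasure.represents_ofAtoms (E : Submodule ℝ (X → Matrix (Fin q) (Fin q) ℂ))
    {Λ : E →ₗ[ℝ] ℝ} {pts : Fin k → X} {Mats : Fin k → Matrix (Fin q) (Fin q) ℂ}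
    (hMats : ∀ j, (Mats j).PosSemidef) (hΛ : Λ = ∑ j, traceEval E (pts j) (Mats j)) :
    Represents E Λ (ofAtoms pts Mats hMats) := by
  refine ⟨fun F => integrable_finsetSum_measure.mpr fun x _ => integrable_dirac enorm_lt_top,
    fun F => ?_⟩
  dsimp only [ofAtoms]
  rw [integral_finsetSum_measure fun x _ => integrable_dirac enorm_lt_top]
  simp only [integral_dirac, hΛ, LinearMap.coe_sum, Finset.sum_apply, traceEval_apply]
  rw [← Finset.sum_fiberwise_of_maps_to fun j _ =>
    Finset.mem_image_of_mem pts (Finset.mem_univ j)]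
  refine Finset.sum_congr rfl fun x _ => ?_
  rw [Matrix.mul_sum, Matrix.trace_sum, Complex.re_sum]
  exact Finset.sum_congr rfl fun j hj => by rw [(Finset.mem_filter.mp hj).2]

end atoms

theorem exists_traceEval_atoms {X n : Type*} [Fintype n] [DecidableEq X]
    (E : Submodule ℝ (X → Matrix n n ℂ)) [FiniteDimensional ℝ E]
    (hherm : ∀ F ∈ E, ∀ x, (F x).IsHermitian) {Λ : E →ₗ[ℝ] ℝ}
    (hstrict : ∀ F : E, F ≠ 0 → (∀ x, ((F : X → Matrix n n ℂ) x).PosSemidef) → 0 < Λ F)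
    (x₀ : X) {M : Matrix n n ℂ} (hM : M.PosSemidef) :
    ∃ (k : ℕ) (pts : Fin k → X) (Mats : Fin k → Matrix n n ℂ) (ε : ℝ),
      0 < ε ∧ (∀ j, (Mats j).PosSemidef) ∧ Λ = ∑ j, traceEval E (pts j) (Mats j) ∧
      ((∑ j ∈ Finset.univ.filter fun j => pts j = x₀, Mats j) - ε • M).PosSemidef := by
  let S : Set (Module.Dual ℝ E) := {φ | ∃ x A, A.PosSemidef ∧ traceEval E x A = φ}
  have hpsd (F : E) (hF : ∀ φ ∈ S, 0 ≤ φ F) (x : X) : ((F : X → Matrix n n ℂ) x).PosSemidef :=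
    (hherm F F.2 x).posSemidef_of_re_trace_mul_nonneg fun A hA => by
      simpa using hF _ ⟨x, A, hA, rfl⟩
  obtain ⟨ε, hε, hmem⟩ := Module.Dual.exists_sub_smul_mem_hull_of_pos (S := S)
    (fun F hF hS => hstrict F hF (hpsd F hS)) (traceEval E x₀ M)
  obtain ⟨k, c, g, hg⟩ := Submodule.mem_span_set'.mp hmem
  choose pts Mats hMats hgeq using fun i => (g i).2
  refine ⟨k + 1, Fin.cons x₀ pts, Fin.cons (ε • M) fun i => (c i : ℝ) • Mats i, ε, hε,
    Fin.cases (hM.smul hε.le) fun i => (hMats i).smul (c i).2, ?_, ?_⟩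
  · rw [Fin.sum_univ_succ]
    simp only [Fin.cons_zero, Fin.cons_succ, ← smul_traceEval, hgeq]
    rw [show ∑ i, (c i : ℝ) • (g i : Module.Dual ℝ E) = _ from hg, add_sub_cancel]
  · rw [Fin.sum_filter_cons_eq, add_sub_cancel_left]
    exact posSemidef_sum _ fun i _ => (hMats i).smul (c i).2

theorem stmt_15_general {X : Type*} [MeasurableSpace X] [MeasurableSingletonClass X] [DecidableEq X]
    {q : ℕ} (E : Submodule ℝ (X → Matrix (Fin q) (Fin q) ℂ)) [FiniteDimensional ℝ E]
    (hherm : ∀ F ∈ E, ∀ x, (F x).IsHermitian)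
    (Λ : E →ₗ[ℝ] ℝ)
    (hstrict : ∀ F : E, F ≠ 0 →
      (∀ x, ((F : X → Matrix (Fin q) (Fin q) ℂ) x).PosSemidef) → 0 < Λ F)
    (x₀ : X) (M : Matrix (Fin q) (Fin q) ℂ) (hM : M.PosSemidef) :
    (∃ μ : MatMeasure X q, Represents E Λ μ) ∧
    ∃ (k : ℕ) (pts : Fin k → X) (Mats : Fin k → Matrix (Fin q) (Fin q) ℂ) (ε : ℝ),
      0 < ε ∧ (∀ j, (Mats j).PosSemidef) ∧
      (∀ F : E, Λ F =
        ∑ j, (((F : X → Matrix (Fin q) (Fin q) ℂ) (pts j) * Mats j).trace).re) ∧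
      ((∑ j ∈ Finset.univ.filter fun j => pts j = x₀, Mats j) - ε • M).PosSemidef := by
  obtain ⟨k, pts, Mats, ε, hε, hMats, hΛ, hx₀⟩ := exists_traceEval_atoms E hherm hstrict x₀ hM
  refine ⟨⟨_, MatMeasure.represents_ofAtoms E hMats hΛ⟩, k, pts, Mats, ε, hε, hMats,
    fun F => by simp [hΛ], hx₀⟩

/-- Every strictly `E_⪰`-positive linear functional `Λ` on `E` is a moment functional; moreover,
for any point `x₀ ∈ X` and any positive semidefinite `M`, there are a finitely atomic
representing measure `ν = Σ_j Mats_j δ_{pts_j}` of `Λ` and `ε > 0` with `ν({x₀}) ⪰ ε M`. -/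
theorem stmt_15 {X : Type*} [MeasurableSpace X] [MeasurableSingletonClass X] [DecidableEq X]
    {q : ℕ} (E : Submodule ℝ (X → Matrix (Fin q) (Fin q) ℂ)) [FiniteDimensional ℝ E]
    (hmeas : ∀ F ∈ E, ∀ i j, Measurable fun x => F x i j)
    (hherm : ∀ F ∈ E, ∀ x, (F x).IsHermitian)
    (Λ : E →ₗ[ℝ] ℝ)
    (hstrict : ∀ F : E, F ≠ 0 →
      (∀ x, ((F : X → Matrix (Fin q) (Fin q) ℂ) x).PosSemidef) → 0 < Λ F)
    (x₀ : X) (M : Matrix (Fin q) (Fin q) ℂ) (hM : M.PosSemidef) :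
    (∃ μ : MatMeasure X q, Represents E Λ μ) ∧
    ∃ (k : ℕ) (pts : Fin k → X) (Mats : Fin k → Matrix (Fin q) (Fin q) ℂ) (ε : ℝ),
      0 < ε ∧ (∀ j, (Mats j).PosSemidef) ∧
      (∀ F : E, Λ F =
        ∑ j, (((F : X → Matrix (Fin q) (Fin q) ℂ) (pts j) * Mats j).trace).re) ∧
      ((∑ j ∈ Finset.univ.filter fun j => pts j = x₀, Mats j) - ε • M).PosSemidef :=
  stmt_15_general E hherm Λ hstrict x₀ M hM
end

section
/- Let Λ be a moment functional on E and x ∈ X. For every representing measure μ of Λ, there exists a finitely atomic representing measure ν of Λ with ν({x}) = μ({x}). -/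
/-
Richter–Tchakaloff: if `v = ∫ f dτ` with `f` integrable into a finite-dimensional space and `S`
has full measure, then `v` lies in the convex cone generated by `f(S)`. Otherwise some nonzero
functional `ℓ` is `≥ 0` on that cone with `ℓ v ≤ 0` (Hahn–Banach against the interior of the cone,
or a functional killing its span when the span is proper); then `∫ ℓ ∘ f ≤ 0` forces `ℓ ∘ f = 0`
a.e., so `f` a.e. takes values in `ker ℓ`, and induction on the dimension applies. For the theorem,
split off the atom `μ({x}) δ_x` and apply this to `F ↦ ∫_{X ∖ {x}} ⟨F, dμ⟩`: the resulting atoms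
all lie away from `x`.
-/

open Matrix MeasureTheory ComplexOrder

open Set

namespace PointedCone

section Module

variable {V : Type*} [AddCommGroup V] [Module ℝ V]

lemma nonpos_of_forall_le {C : PointedCone ℝ V} {ℓ : V →ₗ[ℝ] ℝ} {a : ℝ}
    (h : ∀ z ∈ C, ℓ z ≤ a) {z : V} (hz : z ∈ C) : ℓ z ≤ 0 := by
  by_contra! hpos
  have ha : 0 ≤ a := by simpa using h 0 C.zero_mem
  have := h _ (C.smul_mem (r := (a + 1) / ℓ z) (by positivity) hz)
  rw [map_smul, smul_eq_mul, div_mul_cancel₀ _ hpos.ne'] at this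
  linarith

lemma exists_fin_sum_of_mem_hull_image {Y M : Type*} [AddCommMonoid M] [Module ℝ M]
    {g : Y → M} {S : Set Y} {z : M} (h : z ∈ hull ℝ (g '' S)) :
    ∃ (k : ℕ) (p : Fin k → Y) (c : Fin k → ℝ),
      (∀ j, p j ∈ S) ∧ (∀ j, 0 ≤ c j) ∧ z = ∑ j, c j • g (p j) := by
  obtain ⟨k, c, w, rfl⟩ := Submodule.mem_span_set'.1 h
  choose p hpS hp using fun j => (w j).2
  exact ⟨k, p, fun j => c j, hpS, fun j => (c j).2, by simp [hp]⟩

end Module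

variable {V : Type*} [NormedAddCommGroup V] [NormedSpace ℝ V] [FiniteDimensional ℝ V]

lemma interior_nonempty_of_span_eq_top {C : PointedCone ℝ V}
    (hC : Submodule.span ℝ (C : Set V) = ⊤) : (interior (C : Set V)).Nonempty := by
  rw [C.convex.interior_nonempty_iff_affineSpan_eq_top,
    AffineSubspace.affineSpan_eq_top_iff_vectorSpan_eq_top_of_nonempty ℝ V V ⟨0, C.zero_mem⟩,
    vectorSpan_eq_span_vsub_set_right ℝ C.zero_mem]
  simpa using hC

theorem exists_dual_nonneg_of_notMem {C : PointedCone ℝ V} {v : V} (hv : v ∉ C) :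
    ∃ ℓ : StrongDual ℝ V, ℓ ≠ 0 ∧ (∀ z ∈ C, 0 ≤ ℓ z) ∧ ℓ v ≤ 0 := by
  by_cases hC : Submodule.span ℝ (C : Set V) = ⊤
  · obtain ⟨ℓ, hℓ, hle⟩ := geometric_hahn_banach_of_nonempty_interior_point C.convex
      (fun h => hv (interior_subset h)) (interior_nonempty_of_span_eq_top hC)
    refine ⟨-ℓ, neg_ne_zero.2 hℓ, fun z hz => ?_, ?_⟩
    · simpa using nonpos_of_forall_le (ℓ := ℓ) hle hz
    · simpa using hle 0 C.zero_mem
  · obtain ⟨ℓ, hℓ, hker⟩ := Submodule.exists_le_ker_of_lt_top _ (lt_top_iff_ne_top.2 hC)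
    have hzero : ∀ z ∈ C, ℓ z = 0 := fun z hz => hker (Submodule.subset_span hz)
    rcases le_total (ℓ v) 0 with h | h
    · exact ⟨LinearMap.toContinuousLinearMap ℓ, by simpa using hℓ,
        fun z hz => (hzero z hz).ge, h⟩
    · exact ⟨-LinearMap.toContinuousLinearMap ℓ, by simpa using hℓ,
        fun z hz => by simp [hzero z hz], by simpa using h⟩

variable {Y : Type*} [MeasurableSpace Y] {τ : Measure Y}

lemma integral_mem_hull_image_of_forall_mem_submodule {K : Submodule ℝ V} {S : Set Y}
    (hK : ∀ g : Y → K, Integrable g τ → ∫ y, g y ∂τ ∈ hull ℝ (g '' S))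
    {f : Y → V} (hf : Integrable f τ) (hS : ∀ᵐ y ∂τ, y ∈ S) (hfK : ∀ y ∈ S, f y ∈ K) :
    ∫ y, f y ∂τ ∈ hull ℝ (f '' S) := by
  obtain ⟨P, hP⟩ := Submodule.ClosedComplemented.of_finiteDimensional K
  have hPf : ∀ y ∈ S, (P (f y) : V) = f y := fun y hy => congrArg _ (hP ⟨f y, hfK y hy⟩)
  have hint : ∫ y, f y ∂τ = K.subtypeL (∫ y, P (f y) ∂τ) := by
    rw [← K.subtypeL.integral_comp_comm (P.integrable_comp hf)]
    exact integral_congr_ae (hS.mono fun y hy => (hPf y hy).symm)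
  have himage :
      (K.subtype.restrictScalars {c : ℝ // 0 ≤ c}) '' ((fun y => P (f y)) '' S) = f '' S := by
    rw [image_image]
    exact image_congr hPf
  rw [hint, ← himage]
  exact Submodule.apply_mem_span_image_of_mem_span _ (hK _ (P.integrable_comp hf))

theorem integral_mem_hull_image {f : Y → V} (hf : Integrable f τ) {S : Set Y}
    (hS : ∀ᵐ y ∂τ, y ∈ S) : ∫ y, f y ∂τ ∈ hull ℝ (f '' S) := by
  induction h : Module.finrank ℝ V using Nat.strong_induction_on generalizing V S with
  | _ n ih =>
  by_contra hv
  obtain ⟨ℓ, hℓ0, hℓC, hℓv⟩ := exists_dual_nonneg_of_notMem hv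
  have hℓf : ∀ᵐ y ∂τ, ℓ (f y) = 0 := by
    have hnonneg : 0 ≤ᵐ[τ] fun y => ℓ (f y) :=
      hS.mono fun y hy => hℓC _ (subset_hull (mem_image_of_mem f hy))
    have hzero : ∫ y, ℓ (f y) ∂τ = 0 :=
      le_antisymm (by rwa [ℓ.integral_comp_comm hf]) (integral_nonneg_of_ae hnonneg)
    exact (integral_eq_zero_iff_of_nonneg_ae hnonneg (ℓ.integrable_comp hf)).1 hzero
  have hrank : Module.finrank ℝ (LinearMap.ker (ℓ : V →ₗ[ℝ] ℝ)) < n := by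
    rw [← h]
    refine Submodule.finrank_lt fun htop => hℓ0 ?_
    exact ContinuousLinearMap.coe_injective (LinearMap.ker_eq_top.1 htop)
  have hS' : ∀ᵐ y ∂τ, y ∈ S ∩ {y | ℓ (f y) = 0} := hS.and hℓf
  exact hv (Submodule.span_mono (image_mono inter_subset_left)
    (integral_mem_hull_image_of_forall_mem_submodule (fun g hg => ih _ hrank hg hS' rfl) hf hS'
      fun y hy => hy.2))

variable {E : Type*} [AddCommGroup E] [Module ℝ E] [FiniteDimensional ℝ E]

theorem mem_hull_image_of_eq_integral {ev : Y → Module.Dual ℝ E}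
    (hev : ∀ F, Integrable (fun y => ev y F) τ) {Λ : Module.Dual ℝ E}
    (hΛ : ∀ F, Λ F = ∫ y, ev y F ∂τ) {S : Set Y} (hS : ∀ᵐ y ∂τ, y ∈ S) :
    Λ ∈ hull ℝ (ev '' S) := by
  let B := Module.finBasis ℝ E
  let e := B.dualBasis.equivFun
  have hint : Integrable (fun y => e (ev y)) τ :=
    integrable_pi_iff.2 fun i => by simpa [e] using hev (B i)
  have hΛe : e Λ = ∫ y, e (ev y) ∂τ := by
    funext i
    rw [eval_integral (integrable_pi_iff.1 hint)]
    simpa [e] using hΛ (B i)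
  have := Submodule.apply_mem_span_image_of_mem_span
    (e.symm.toLinearMap.restrictScalars {c : ℝ // 0 ≤ c}) (integral_mem_hull_image hint hS)
  simpa [← hΛe, image_image] using this

end PointedCone

section TraceForm

variable {X : Type*} {q : ℕ}

noncomputable def traceForm (E : Submodule ℝ (X → Matrix (Fin q) (Fin q) ℂ))
    (Φ : X → Matrix (Fin q) (Fin q) ℂ) (y : X) : Module.Dual ℝ E where
  toFun F := (((F : X → Matrix (Fin q) (Fin q) ℂ) y * Φ y).trace).re
  map_add' F G := by simp [add_mul, trace_add]
  map_smul' c F := by simp [trace_smul]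

lemma re_trace_mul_real_smul (A M : Matrix (Fin q) (Fin q) ℂ) (a : ℝ) :
    ((A * (a • M)).trace).re = a * ((A * M).trace).re := by
  rw [Matrix.mul_smul, trace_smul, Complex.smul_re, smul_eq_mul]

end TraceForm

theorem stmt_16_general {X : Type*} [MeasurableSpace X] [MeasurableSingletonClass X] [DecidableEq X]
    {q : ℕ} (E : Submodule ℝ (X → Matrix (Fin q) (Fin q) ℂ)) [FiniteDimensional ℝ E]
    (Λ : E →ₗ[ℝ] ℝ) (μ : MatMeasure X q) (hμ : Represents E Λ μ) (x : X) :
    ∃ (k : ℕ) (pts : Fin k → X) (Mats : Fin k → Matrix (Fin q) (Fin q) ℂ),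
      (∀ j, (Mats j).PosSemidef) ∧
      (∀ F : E, Λ F =
        ∑ j, (((F : X → Matrix (Fin q) (Fin q) ℂ) (pts j) * Mats j).trace).re) ∧
      (∑ j ∈ Finset.univ.filter fun j => pts j = x, Mats j)
        = (μ.τ {x}).toReal • μ.Φ x := by
  set ev := traceForm E μ.Φ
  set c0 := (μ.τ {x}).toReal
  have hcompl : ∀ F, (Λ - c0 • ev x) F = ∫ y, ev y F ∂μ.τ.restrict {x}ᶜ := fun F => by
    have hsplit := integral_add_compl (measurableSet_singleton x) (hμ.1 F)
    rw [integral_singleton, smul_eq_mul] at hsplit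
    rw [LinearMap.sub_apply, LinearMap.smul_apply, smul_eq_mul, hμ.2 F, ← hsplit]
    simp [ev, traceForm, c0, measureReal_def]
  obtain ⟨k, p, c, hpS, hc, hsum⟩ := PointedCone.exists_fin_sum_of_mem_hull_image
    (PointedCone.mem_hull_image_of_eq_integral (fun F => (hμ.1 F).restrict) hcompl
      (ae_restrict_mem (measurableSet_singleton x).compl))
  refine ⟨k + 1, Fin.cons x p, Fin.cons (c0 • μ.Φ x) fun j => c j • μ.Φ (p j), ?_, ?_, ?_⟩
  · intro j
    cases j using Fin.cases with
    | zero => exact (μ.posSemidef x).smul ENNReal.toReal_nonneg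
    | succ j => exact (μ.posSemidef (p j)).smul (hc j)
  · intro F
    have hF := congrArg (· F) hsum
    simp only [LinearMap.sub_apply, LinearMap.smul_apply, LinearMap.sum_apply,
      smul_eq_mul] at hF
    simp only [Fin.sum_univ_succ, Fin.cons_zero, Fin.cons_succ, re_trace_mul_real_smul]
    change Λ F = c0 * ev x F + ∑ j, c j * ev (p j) F
    linarith
  · have hp : ∀ j, p j ≠ x := hpS
    simp [Finset.sum_filter, Fin.sum_univ_succ, hp]

/-- For a moment functional `Λ` on `E` with representing measure `μ` and a point `x ∈ X`, there
is a finitely atomic representing measure `ν = Σ_j Mats_j δ_{pts_j}` of `Λ` with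
`ν({x}) = μ({x})`. -/
theorem stmt_16 {X : Type*} [MeasurableSpace X] [MeasurableSingletonClass X] [DecidableEq X]
    {q : ℕ} (E : Submodule ℝ (X → Matrix (Fin q) (Fin q) ℂ)) [FiniteDimensional ℝ E]
    (hmeas : ∀ F ∈ E, ∀ i j, Measurable fun x => F x i j)
    (hherm : ∀ F ∈ E, ∀ x, (F x).IsHermitian)
    (Λ : E →ₗ[ℝ] ℝ) (μ : MatMeasure X q) (hμ : Represents E Λ μ) (x : X) :
    ∃ (k : ℕ) (pts : Fin k → X) (Mats : Fin k → Matrix (Fin q) (Fin q) ℂ),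
      (∀ j, (Mats j).PosSemidef) ∧
      (∀ F : E, Λ F =
        ∑ j, (((F : X → Matrix (Fin q) (Fin q) ℂ) (pts j) * Mats j).trace).re) ∧
      (∑ j ∈ Finset.univ.filter fun j => pts j = x, Mats j)
        = (μ.τ {x}).toReal • μ.Φ x :=
  stmt_16_general E Λ μ hμ x
end
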